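/- arXiv:2108.11000 — 2 statements merged into one kernel-verified Lean document; each statement's English description precedes it below -/
import Mathlib

section
/- For any two probability density functions g1 and g2 on a measure space, the expectation under g1 of the absolute value of log(g1/g2) is at most KL(g1, g2) + 2/e. -/
/-!
Pointwise, `g1 |log (g1/g2)| = g1 log (g1/g2) + 2 g1 max (log (g2/g1)) 0`, and `log y ≤ y / e`
gives `g1 log (g2/g1) ≤ g2 / e`. Integrating, the correction term is at most `2/e · ∫ g2 = 2/e`.
-/

open MeasureTheory

namespace Real

lemma log_le_div_exp {x : ℝ} (hx : 0 ≤ x) : log x ≤ x / exp 1 := by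
  obtain rfl | hx := hx.eq_or_lt
  · simp
  have h := log_le_sub_one_of_pos (show 0 < x / exp 1 by positivity)
  rw [log_div hx.ne' (exp_ne_zero 1), log_exp] at h
  linarith

lemma mul_log_div_le_div_exp {a b : ℝ} (ha : 0 ≤ a) (hb : 0 ≤ b) :
    a * log (b / a) ≤ b / exp 1 := by
  obtain rfl | ha := ha.eq_or_lt
  · simp only [zero_mul]
    positivity
  calc a * log (b / a) ≤ a * (b / a / exp 1) :=
        mul_le_mul_of_nonneg_left (log_le_div_exp (by positivity)) ha.le
    _ = b / exp 1 := by field_simp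

lemma mul_abs_log_div_le {a b : ℝ} (ha : 0 ≤ a) (hb : 0 ≤ b) :
    a * |log (a / b)| ≤ a * log (a / b) + 2 * (b / exp 1) := by
  rcases le_or_gt 0 (log (a / b)) with h | h
  · rw [abs_of_nonneg h]
    have : 0 ≤ b / exp 1 := by positivity
    linarith
  · rw [abs_of_neg h]
    have := mul_log_div_le_div_exp ha hb
    rw [← inv_div, log_inv] at this
    linarith

end Real

theorem stmt0_general {α : Type*} [MeasurableSpace α] (μ : Measure α)
    (g1 g2 : α → ℝ) (hg1 : ∀ x, 0 ≤ g1 x) (hg2 : ∀ x, 0 ≤ g2 x)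
    (h2 : ∫ x, g2 x ∂μ = 1)
    (hint : Integrable (fun x => g1 x * |Real.log (g1 x / g2 x)|) μ)
    (hintKL : Integrable (fun x => g1 x * Real.log (g1 x / g2 x)) μ) :
    ∫ x, g1 x * |Real.log (g1 x / g2 x)| ∂μ ≤
      (∫ x, g1 x * Real.log (g1 x / g2 x) ∂μ) + 2 / Real.exp 1 := by
  have hcorr : Integrable (fun x => 2 * (g2 x / Real.exp 1)) μ :=
    ((integrable_of_integral_eq_one h2).div_const _).const_mul 2
  calc ∫ x, g1 x * |Real.log (g1 x / g2 x)| ∂μ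
      ≤ ∫ x, g1 x * Real.log (g1 x / g2 x) + 2 * (g2 x / Real.exp 1) ∂μ :=
        integral_mono hint (hintKL.add hcorr) fun x => Real.mul_abs_log_div_le (hg1 x) (hg2 x)
    _ = (∫ x, g1 x * Real.log (g1 x / g2 x) ∂μ) + 2 / Real.exp 1 := by
        rw [integral_add hintKL hcorr, integral_const_mul, integral_div, h2]
        ring

/-- For any two probability density functions `g1` and `g2` on a measure space,
the expectation under `g1` of `|log (g1/g2)|` is at most `KL(g1,g2) + 2/e`. -/
theorem stmt0 {α : Type*} [MeasurableSpace α] (μ : Measure α)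
    (g1 g2 : α → ℝ) (hg1 : ∀ x, 0 ≤ g1 x) (hg2 : ∀ x, 0 ≤ g2 x)
    (hm1 : Measurable g1) (hm2 : Measurable g2)
    (h1 : ∫ x, g1 x ∂μ = 1) (h2 : ∫ x, g2 x ∂μ = 1)
    (hint : Integrable (fun x => g1 x * |Real.log (g1 x / g2 x)|) μ)
    (hintKL : Integrable (fun x => g1 x * Real.log (g1 x / g2 x)) μ) :
    ∫ x, g1 x * |Real.log (g1 x / g2 x)| ∂μ ≤
      (∫ x, g1 x * Real.log (g1 x / g2 x) ∂μ) + 2 / Real.exp 1 :=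
  stmt0_general μ g1 g2 hg1 hg2 h2 hint hintKL
end

section
/- Let ψ: ℝ → ℝ be a 1-Lipschitz activation function applied coordinatewise, and let η and η* be two feedforward networks of depth L+1 with the same architecture, with weight-and-bias matrices W̄_l and W̄*_l whose rows have L¹ norms bounded by B_l ≥ 1 in the l-th layer, and suppose each row of W̄_l − W̄*_l has L¹ norm at most ζ·B_l. Then for every input x ∈ [0,1]^p, |η(x) − η*(x)| ≤ ζ·(L+1)·∏_{j=0}^L B_j. -/
/-!
Induction over the layers. The outputs of layer `l` are bounded by `P_l = ∏_{t ≤ l} B_t`.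
Since `ψ` is 1-Lipschitz, the error of layer `l+1` is at most that of its affine part, which
splits as the weight error applied to the exact input, at most `ζ B_{l+1} P_l`, plus the
perturbed weights applied to the incoming error, at most `B_{l+1} · ζ (l+1) P_l`. Their sum is
`ζ (l+2) P_{l+1}`, and the linear output layer contributes one more such step.
-/

open Finset

/-- Hidden-layer outputs of a feedforward network: `hid ψ k W v l x` is the
output of the `l`-th hidden layer (activation `ψ` applied coordinatewise). -/
noncomputable def hid (ψ : ℝ → ℝ) (k : ℕ → ℕ)
    (W : ∀ l : ℕ, Fin (k (l+1)) → Fin (k l) → ℝ)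
    (v : ∀ l : ℕ, Fin (k (l+1)) → ℝ) :
    (l : ℕ) → (Fin (k 0) → ℝ) → Fin (k (l+1)) → ℝ
  | 0, x, i => ψ (∑ j, W 0 i j * x j + v 0 i)
  | (l+1), x, i => ψ (∑ j, W (l+1) i j * hid ψ k W v l x j + v (l+1) i)

/-- Network output: linear output layer on top of `M+1` hidden layers
(depth `M+2`, i.e. the paper's `L = M+1`). -/
noncomputable def netOut (ψ : ℝ → ℝ) (k : ℕ → ℕ)
    (W : ∀ l : ℕ, Fin (k (l+1)) → Fin (k l) → ℝ)
    (v : ∀ l : ℕ, Fin (k (l+1)) → ℝ) (M : ℕ)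
    (x : Fin (k 0) → ℝ) (i : Fin (k (M+2))) : ℝ :=
  ∑ j, W (M+1) i j * hid ψ k W v M x j + v (M+1) i

section Affine

variable {n : ℕ}

lemma abs_sum_mul_le (a d : Fin n → ℝ) (D : ℝ) (hd : ∀ j, |d j| ≤ D) :
    |∑ j, a j * d j| ≤ (∑ j, |a j|) * D := by
  grw [abs_sum_le_sum_abs, sum_mul]
  gcongr with j
  rw [abs_mul]
  gcongr
  exact hd j

lemma abs_affine_le (a b : Fin n → ℝ) (c P : ℝ) (hP : 1 ≤ P) (hb : ∀ j, |b j| ≤ P) :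
    |∑ j, a j * b j + c| ≤ ((∑ j, |a j|) + |c|) * P :=
  calc |∑ j, a j * b j + c|
      ≤ (∑ j, |a j|) * P + |c| * P := by
        grw [abs_add_le, abs_sum_mul_le a b P hb]
        gcongr
        exact le_mul_of_one_le_right (abs_nonneg c) hP
    _ = ((∑ j, |a j|) + |c|) * P := by rw [add_mul]

lemma abs_affine_sub_affine_le (a a' b b' : Fin n → ℝ) (c c' B P D ζ : ℝ)
    (hP : 1 ≤ P) (hD : 0 ≤ D) (hb : ∀ j, |b j| ≤ P) (hbb' : ∀ j, |b j - b' j| ≤ D)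
    (hrow' : (∑ j, |a' j|) + |c'| ≤ B)
    (hdiff : (∑ j, |a j - a' j|) + |c - c'| ≤ ζ * B) :
    |(∑ j, a j * b j + c) - (∑ j, a' j * b' j + c')| ≤ ζ * B * P + B * D := by
  have hsplit : (∑ j, a j * b j + c) - (∑ j, a' j * b' j + c')
      = (∑ j, (a j - a' j) * b j + (c - c')) + ∑ j, a' j * (b j - b' j) := by
    simp only [sub_mul, mul_sub, sum_sub_distrib]
    ring
  have hW' : ∑ j, |a' j| ≤ B := (le_add_of_nonneg_right (abs_nonneg c')).trans hrow'
  rw [hsplit]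
  calc _ ≤ |∑ j, (a j - a' j) * b j + (c - c')| + |∑ j, a' j * (b j - b' j)| :=
        abs_add_le _ _
    _ ≤ ((∑ j, |a j - a' j|) + |c - c'|) * P + (∑ j, |a' j|) * D := by
        gcongr
        · exact abs_affine_le _ b _ P hP hb
        · exact abs_sum_mul_le a' _ D hbb'
    _ ≤ ζ * B * P + B * D := by gcongr

end Affine

lemma one_le_prod_range {B : ℕ → ℝ} (hB : ∀ l, 1 ≤ B l) (n : ℕ) :
    1 ≤ ∏ t ∈ range n, B t :=
  one_le_prod fun t _ => hB t

section Network

variable {ψ : ℝ → ℝ} {k : ℕ → ℕ} {W W' : ∀ l : ℕ, Fin (k (l+1)) → Fin (k l) → ℝ}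
  {v v' : ∀ l : ℕ, Fin (k (l+1)) → ℝ} {B : ℕ → ℝ} {ζ : ℝ} {x : Fin (k 0) → ℝ}

lemma abs_hid_le (hψ : ∀ a b : ℝ, |ψ a - ψ b| ≤ |a - b|) (hψ0 : ψ 0 = 0)
    (hB : ∀ l, 1 ≤ B l) (hx : ∀ j, |x j| ≤ 1) (l : ℕ)
    (hrow : ∀ t ≤ l, ∀ i, (∑ j, |W t i j|) + |v t i| ≤ B t) (i : Fin (k (l+1))) :
    |hid ψ k W v l x i| ≤ ∏ t ∈ range (l+1), B t := by
  have hψabs : ∀ a, |ψ a| ≤ |a| := fun a => by simpa [hψ0] using hψ a 0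
  induction l with
  | zero =>
    calc |hid ψ k W v 0 x i| ≤ ((∑ j, |W 0 i j|) + |v 0 i|) * 1 :=
          (hψabs _).trans (abs_affine_le _ x _ 1 le_rfl hx)
      _ ≤ ∏ t ∈ range 1, B t := by simpa using hrow 0 le_rfl i
  | succ l ih =>
    have hprev := ih (fun t ht => hrow t (by omega))
    calc |hid ψ k W v (l+1) x i|
        ≤ ((∑ j, |W (l+1) i j|) + |v (l+1) i|) * ∏ t ∈ range (l+1), B t :=
          (hψabs _).trans (abs_affine_le _ _ _ _ (one_le_prod_range hB _) hprev)
      _ ≤ B (l+1) * ∏ t ∈ range (l+1), B t := by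
          gcongr
          · exact zero_le_one.trans (one_le_prod_range hB _)
          · exact hrow (l+1) le_rfl i
      _ = ∏ t ∈ range (l+2), B t := by rw [prod_range_succ _ (l+1), mul_comm]

lemma abs_hid_sub_hid_le (hψ : ∀ a b : ℝ, |ψ a - ψ b| ≤ |a - b|) (hψ0 : ψ 0 = 0)
    (hB : ∀ l, 1 ≤ B l) (hζ : 0 ≤ ζ) (hx : ∀ j, |x j| ≤ 1) (l : ℕ)
    (hrow : ∀ t ≤ l, ∀ i, (∑ j, |W t i j|) + |v t i| ≤ B t)
    (hrow' : ∀ t ≤ l, ∀ i, (∑ j, |W' t i j|) + |v' t i| ≤ B t)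
    (hdiff : ∀ t ≤ l, ∀ i, (∑ j, |W t i j - W' t i j|) + |v t i - v' t i| ≤ ζ * B t)
    (i : Fin (k (l+1))) :
    |hid ψ k W v l x i - hid ψ k W' v' l x i| ≤ ζ * (l + 1) * ∏ t ∈ range (l+1), B t := by
  induction l with
  | zero =>
    have hstep := abs_affine_sub_affine_le (W 0 i) (W' 0 i) x x (v 0 i) (v' 0 i) (B 0) 1 0 ζ
      le_rfl le_rfl hx (by simp) (hrow' 0 le_rfl i) (hdiff 0 le_rfl i)
    simpa only [hid, range_one, prod_singleton, CharP.cast_eq_zero, zero_add, mul_one, mul_zero,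
      add_zero] using (hψ _ _).trans hstep
  | succ l ih =>
    set P := ∏ t ∈ range (l+1), B t
    have hprev := ih (fun t ht => hrow t (by omega)) (fun t ht => hrow' t (by omega))
      (fun t ht => hdiff t (by omega))
    have hstep := abs_affine_sub_affine_le (W (l+1) i) (W' (l+1) i) _ _ (v (l+1) i)
      (v' (l+1) i) (B (l+1)) P _ ζ (one_le_prod_range hB _)
      (by have := one_le_prod_range hB (l+1); positivity)
      (abs_hid_le hψ hψ0 hB hx l (fun t ht => hrow t (by omega))) hprev
      (hrow' (l+1) le_rfl i) (hdiff (l+1) le_rfl i)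
    refine ((hψ _ _).trans hstep).trans (le_of_eq ?_)
    rw [prod_range_succ _ (l+1)]
    push_cast
    ring

end Network

/-- If `ψ` is `1`-Lipschitz with `ψ(0)=0`, both networks have rows of the
augmented weight matrices with `L¹` norm at most `B_l ≥ 1` in layer `l`, and
each row of the difference of augmented weight matrices has `L¹` norm at most
`ζ·B_l`, then for every input `x ∈ [0,1]^p`,
`|η(x) − η*(x)| ≤ ζ·(L+1)·∏_{j=0}^L B_j` (here `L = M+1`). -/
theorem stmt9 (M : ℕ) (k : ℕ → ℕ) (ψ : ℝ → ℝ)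
    (hψ : ∀ a b : ℝ, |ψ a - ψ b| ≤ |a - b|) (hψ0 : ψ 0 = 0)
    (W W' : ∀ l : ℕ, Fin (k (l+1)) → Fin (k l) → ℝ)
    (v v' : ∀ l : ℕ, Fin (k (l+1)) → ℝ)
    (B : ℕ → ℝ) (hB : ∀ l, 1 ≤ B l) (ζ : ℝ) (hζ : 0 ≤ ζ)
    (hrow : ∀ l ≤ M+1, ∀ i, (∑ j, |W l i j|) + |v l i| ≤ B l)
    (hrow' : ∀ l ≤ M+1, ∀ i, (∑ j, |W' l i j|) + |v' l i| ≤ B l)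
    (hdiff : ∀ l ≤ M+1, ∀ i, (∑ j, |W l i j - W' l i j|) + |v l i - v' l i| ≤ ζ * B l)
    (x : Fin (k 0) → ℝ) (hx : ∀ j, x j ∈ Set.Icc (0:ℝ) 1) :
    ∀ i, |netOut ψ k W v M x i - netOut ψ k W' v' M x i|
      ≤ ζ * (M + 2) * ∏ j ∈ Finset.range (M + 2), B j := by
  intro i
  have hx' : ∀ j, |x j| ≤ 1 := fun j => abs_le.mpr ⟨by linarith [(hx j).1], (hx j).2⟩
  have hidden := abs_hid_le hψ hψ0 hB hx' M (fun t ht => hrow t (by omega))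
  have hidden_err := abs_hid_sub_hid_le hψ hψ0 hB hζ hx' M (fun t ht => hrow t (by omega))
    (fun t ht => hrow' t (by omega)) (fun t ht => hdiff t (by omega))
  have hout := abs_affine_sub_affine_le (W (M+1) i) (W' (M+1) i) _ _ (v (M+1) i) (v' (M+1) i)
    (B (M+1)) _ _ ζ (one_le_prod_range hB _)
    (by have := one_le_prod_range hB (M+1); positivity) hidden hidden_err
    (hrow' (M+1) le_rfl i) (hdiff (M+1) le_rfl i)
  refine hout.trans (le_of_eq ?_)
  rw [prod_range_succ _ (M+1)]
  ring
end
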